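/- arXiv:1110.4228 — 2 statements merged into one kernel-verified Lean document; each statement's English description precedes it below -/
import Mathlib

section
/- For every k ≥ 1, the length of the k-th word of the Kolakoski fan satisfies 5·(6/5)^{k-1} ≤ |w_k| ≤ 5·(9/5)^{k-1}. -/
/-- Expansion step of the Kolakoski fan: the `i`-th run of `expand w` has length
equal to the `i`-th letter of `w`, the runs alternating between blocks of `1`s
and blocks of `2`s, starting with a block of `1`s. -/
def expand (w : List ℕ) : List ℕ :=
  (List.range w.length).flatMap fun i =>
    List.replicate (w.getD i 0) (if i % 2 = 0 then 1 else 2)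

/-- The Kolakoski fan: `fan 0 = 122` and `fan (k+1) = expand (fan k)`
(so `fan 1 = 12211`). -/
def fan : ℕ → List ℕ
  | 0 => [1, 2, 2]
  | k + 1 => expand (fan k)

/-!
Write `|w|₁` and `|w|₂` for the numbers of `1`s and `2`s in a word `w` over `{1, 2}`.
The runs of `expand v` are alternately of `1`s and of `2`s, so `|expand v|₂` is the sum of
the `⌊|v|/2⌋` letters of `v` in odd position and `|expand v|₁` the sum of the `⌈|v|/2⌉`
letters in even position. As each letter is `1` or `2`, this forces
`|expand v|₁ ≤ 4 |expand v|₂` and `|expand v|₂ ≤ 4 |expand v|₁` once `|v| ≥ 2`, i.e. the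
proportion of `2`s in every `w_k`, `k ≥ 1`, lies in `[1/5, 4/5]`. Since
`|w_{k+1}| = |w_k| + |w_k|₂`, the length grows by a factor between `6/5` and `9/5` at each step.
-/

theorem expand_singleton (a : ℕ) : expand [a] = List.replicate a 1 := by
  simp [expand, List.range_succ]

theorem expand_cons_cons (a b : ℕ) (t : List ℕ) :
    expand (a :: b :: t) = List.replicate a 1 ++ List.replicate b 2 ++ expand t := by
  unfold expand
  rw [List.length_cons, List.length_cons, Nat.add_assoc, Nat.add_comm, List.range_add,
    List.flatMap_append, List.flatMap_map]
  congr 1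
  · simp [List.range_succ]
  · congr 1
    funext i
    rw [show 1 + 1 + i = i + 2 by omega, List.getD_cons_succ, List.getD_cons_succ,
      Nat.add_mod_right]

theorem length_expand : ∀ v : List ℕ, (expand v).length = v.sum
  | [] => rfl
  | [a] => by simp [expand_singleton]
  | a :: b :: t => by
    simp [expand_cons_cons, length_expand t]

theorem eq_one_or_eq_two_of_mem_expand {v : List ℕ} {x : ℕ} (hx : x ∈ expand v) :
    x = 1 ∨ x = 2 := by
  simp only [expand, List.mem_flatMap, List.mem_replicate] at hx
  obtain ⟨i, -, -, rfl⟩ := hx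
  split <;> simp

theorem eq_one_or_eq_two_of_mem_fan {k x : ℕ} (hx : x ∈ fan k) : x = 1 ∨ x = 2 := by
  cases k with
  | zero => simp [fan] at hx; omega
  | succ k => exact eq_one_or_eq_two_of_mem_expand hx

section Binary

variable {v : List ℕ}

theorem count_one_add_count_two (hv : ∀ x ∈ v, x = 1 ∨ x = 2) :
    v.count 1 + v.count 2 = v.length := by
  induction v with
  | nil => rfl
  | cons a t ih =>
    rw [List.forall_mem_cons] at hv
    have := ih hv.2
    rcases hv.1 with rfl | rfl <;> simp <;> omega

theorem sum_eq_length_add_count_two (hv : ∀ x ∈ v, x = 1 ∨ x = 2) :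
    v.sum = v.length + v.count 2 := by
  induction v with
  | nil => rfl
  | cons a t ih =>
    rw [List.forall_mem_cons] at hv
    have := ih hv.2
    rcases hv.1 with rfl | rfl <;> simp <;> omega

end Binary

theorem count_one_expand_cons_cons (a b : ℕ) (t : List ℕ) :
    (expand (a :: b :: t)).count 1 = a + (expand t).count 1 := by
  simp [expand_cons_cons, List.count_replicate]

theorem count_two_expand_cons_cons (a b : ℕ) (t : List ℕ) :
    (expand (a :: b :: t)).count 2 = b + (expand t).count 2 := by
  simp [expand_cons_cons, List.count_replicate]

theorem count_two_expand_bounds :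
    ∀ v : List ℕ, (∀ x ∈ v, x = 1 ∨ x = 2) →
      v.length / 2 ≤ (expand v).count 2 ∧ (expand v).count 2 ≤ 2 * (v.length / 2)
  | [], _ => by simp [expand]
  | [a], _ => by simp [expand_singleton, List.count_replicate]
  | a :: b :: t, hv => by
    have hb := hv b (by simp)
    have ih := count_two_expand_bounds t fun x hx => hv x (by simp [hx])
    rw [count_two_expand_cons_cons, List.length_cons, List.length_cons]
    omega

theorem count_one_expand_bounds :
    ∀ v : List ℕ, (∀ x ∈ v, x = 1 ∨ x = 2) →
      (v.length + 1) / 2 ≤ (expand v).count 1 ∧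
        (expand v).count 1 ≤ 2 * ((v.length + 1) / 2)
  | [], _ => by simp [expand]
  | [a], hv => by
    have ha := hv a (by simp)
    simp [expand_singleton]
    omega
  | a :: b :: t, hv => by
    have ha := hv a (by simp)
    have ih := count_one_expand_bounds t fun x hx => hv x (by simp [hx])
    rw [count_one_expand_cons_cons, List.length_cons, List.length_cons]
    omega

theorem count_expand_balanced {v : List ℕ} (hv : ∀ x ∈ v, x = 1 ∨ x = 2)
    (hlen : 2 ≤ v.length) :
    (expand v).count 1 ≤ 4 * (expand v).count 2 ∧
      (expand v).count 2 ≤ 4 * (expand v).count 1 := by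
  have h₁ := count_one_expand_bounds v hv
  have h₂ := count_two_expand_bounds v hv
  omega

theorem length_fan_succ (k : ℕ) :
    (fan (k + 1)).length = (fan k).length + (fan k).count 2 := by
  rw [fan, length_expand, sum_eq_length_add_count_two fun _ => eq_one_or_eq_two_of_mem_fan]

theorem three_le_length_fan : ∀ k : ℕ, 3 ≤ (fan k).length
  | 0 => le_rfl
  | k + 1 => by
    have := three_le_length_fan k
    rw [length_fan_succ]
    omega

theorem length_fan_growth (k : ℕ) :
    6 * (fan (k + 1)).length ≤ 5 * (fan (k + 2)).length ∧
      5 * (fan (k + 2)).length ≤ 9 * (fan (k + 1)).length := by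
  have hbal := count_expand_balanced (fun _ => eq_one_or_eq_two_of_mem_fan)
    (le_trans (by norm_num) (three_le_length_fan k))
  have hsplit := count_one_add_count_two fun _ => eq_one_or_eq_two_of_mem_fan (k := k + 1)
  rw [fan] at hsplit
  rw [length_fan_succ (k + 1), fan]
  omega

/-- For every `k ≥ 1`, the length of the `k`-th word of the
Kolakoski fan satisfies `5·(6/5)^(k-1) ≤ |w_k| ≤ 5·(9/5)^(k-1)`. -/
theorem fan_length_bounds (k : ℕ) (hk : 1 ≤ k) :
    (5 : ℝ) * (6 / 5) ^ (k - 1) ≤ ((fan k).length : ℝ) ∧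
    ((fan k).length : ℝ) ≤ (5 : ℝ) * (9 / 5) ^ (k - 1) := by
  obtain ⟨n, rfl⟩ := Nat.exists_eq_add_of_le' hk
  set u : ℕ → ℝ := fun m => (fan (m + 1)).length
  have hu₀ : u 0 = 5 := by simp [u, show (fan 1).length = 5 by decide]
  have hgrowth (m : ℕ) : 6 / 5 * u m ≤ u (m + 1) ∧ u (m + 1) ≤ 9 / 5 * u m := by
    obtain ⟨h₁, h₂⟩ := length_fan_growth m
    have h₁' : (6 : ℝ) * u m ≤ 5 * u (m + 1) := by simp only [u]; exact_mod_cast h₁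
    have h₂' : (5 : ℝ) * u (m + 1) ≤ 9 * u m := by simp only [u]; exact_mod_cast h₂
    constructor <;> linarith
  rw [Nat.add_sub_cancel]
  constructor
  · simpa [hu₀, mul_comm] using geom_le (by norm_num) n fun m _ => (hgrowth m).1
  · simpa [hu₀, mul_comm] using le_geom (by norm_num) n fun m _ => (hgrowth m).2
end

section
/- For every n ≥ 1, let r(n) be the index of the run of the classical Kolakoski sequence containing position n, i.e., the unique m ≥ 1 such that K_1 + … + K_{m-1} < n ≤ K_1 + … + K_m. Then (5/9)·n ≤ r(n) ≤ (5/6)·n + 1. -/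
/-- Sum of the first `m` letters of `K` (indices `0, …, m-1`), i.e. `K₁ + ⋯ + K_m`
in the paper's 1-indexed notation. -/
def psum (K : ℕ → ℕ) (m : ℕ) : ℕ := ∑ i ∈ Finset.range m, K i

/-- `K` equals the sequence of its own run lengths: the `m`-th run of `K` occupies
exactly the positions in `[psum K m, psum K (m+1))` (hence has length `K m`);
`K` is constant on each such block, and consecutive blocks carry different
symbols (which is exactly maximality of the runs). -/
def IsRunSelf (K : ℕ → ℕ) : Prop :=
  ∀ m : ℕ,
    (∀ i : ℕ, psum K m ≤ i → i < psum K (m + 1) → K i = K (psum K m)) ∧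
    K (psum K m) ≠ K (psum K (m + 1))

/-- The classical Kolakoski sequence, 0-indexed: `K i` is the letter `K_{i+1}` of
the paper.  It takes values in `{1, 2}`, starts with `1`, and equals the
sequence of its own run lengths. -/
def IsKolakoski (K : ℕ → ℕ) : Prop :=
  (∀ n, K n = 1 ∨ K n = 2) ∧ K 0 = 1 ∧ IsRunSelf K

lemma psum_succ (K : ℕ → ℕ) (m : ℕ) : psum K (m + 1) = psum K m + K m :=
  Finset.sum_range_succ K m

/-- Every position lies in some run-block. -/
lemma exists_block (K : ℕ → ℕ) (hK : IsKolakoski K) (i : ℕ) :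
    ∃ m, psum K m ≤ i ∧ i < psum K (m + 1) := by
  induction i with
  | zero =>
    refine ⟨0, le_refl _, ?_⟩
    have h0 := hK.1 0
    have ha : psum K (0 + 1) = psum K 0 + K 0 := psum_succ K 0
    have hb : psum K 0 = 0 := by simp [psum]
    omega
  | succ i ih =>
    obtain ⟨m, h1, h2⟩ := ih
    by_cases h : i + 1 < psum K (m + 1)
    · exact ⟨m, by omega, h⟩
    · refine ⟨m + 1, by omega, ?_⟩
      have hs : psum K (m + 1 + 1) = psum K (m + 1) + K (m + 1) := psum_succ K (m + 1)
      have := hK.1 (m + 1)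
      omega

/-- No three consecutive equal letters. -/
lemma no_three (K : ℕ → ℕ) (hK : IsKolakoski K) (j : ℕ) :
    ¬ (K j = K (j + 1) ∧ K (j + 1) = K (j + 2)) := by
  rintro ⟨e1, e2⟩
  obtain ⟨m, hm1, hm2⟩ := exists_block K hK j
  have hlen : psum K (m + 1) = psum K m + K m := psum_succ K m
  have hKm := hK.1 m
  have hs2 : psum K (m + 1) ≤ j + 2 := by omega
  have hcs : K (psum K (m + 1) - 1) = K (psum K m) :=
    (hK.2.2 m).1 (psum K (m + 1) - 1) (by omega) (by omega)
  have hne : K (psum K m) ≠ K (psum K (m + 1)) := (hK.2.2 m).2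
  have hcase : psum K (m + 1) = j + 1 ∨ psum K (m + 1) = j + 2 := by omega
  rcases hcase with h | h
  · rw [h] at hcs hne
    simp only [Nat.add_sub_cancel] at hcs
    omega
  · rw [h] at hcs hne
    have : j + 2 - 1 = j + 1 := by omega
    rw [this] at hcs
    omega

lemma three_sum (K : ℕ → ℕ) (hK : IsKolakoski K) (j : ℕ) :
    4 ≤ K j + K (j + 1) + K (j + 2) ∧ K j + K (j + 1) + K (j + 2) ≤ 5 := by
  have h1 := hK.1 j
  have h2 := hK.1 (j + 1)
  have h3 := hK.1 (j + 2)
  have h4 := no_three K hK j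
  omega

lemma psum_three (K : ℕ → ℕ) (t : ℕ) :
    psum K (t + 3) = psum K t + K t + K (t + 1) + K (t + 2) := by
  have a := psum_succ K t
  have b := psum_succ K (t + 1)
  have c := psum_succ K (t + 2)
  have e1 : t + 1 + 1 = t + 2 := by omega
  have e2 : t + 2 + 1 = t + 3 := by omega
  rw [e1] at b; rw [e2] at c
  omega

lemma lemA (K : ℕ → ℕ) (hK : IsKolakoski K) : ∀ m, 5 * psum K m ≤ 9 * m := by
  have key : ∀ q, ∀ r, r < 3 → 5 * psum K (3 * q + r) ≤ 9 * (3 * q + r) := by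
    intro q
    induction q with
    | zero =>
      intro r hr
      have p0 : psum K 0 = 0 := by simp [psum]
      have p1 : psum K 1 = psum K 0 + K 0 := psum_succ K 0
      have p2 : psum K 2 = psum K 1 + K 1 := psum_succ K 1
      have h0 := hK.2.1
      have h1 := hK.1 1
      interval_cases r <;> simp only [Nat.mul_zero, Nat.zero_add] <;> omega
    | succ q ih =>
      intro r hr
      have h := ih r hr
      have hts := three_sum K hK (3 * q + r)
      have hp := psum_three K (3 * q + r)
      have e : 3 * (q + 1) + r = 3 * q + r + 3 := by ring
      rw [e]
      omega
  intro m
  have : m = 3 * (m / 3) + m % 3 := (Nat.div_add_mod m 3).symm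
  rw [this]
  exact key (m / 3) (m % 3) (Nat.mod_lt m (by omega))

lemma lemB (K : ℕ → ℕ) (hK : IsKolakoski K) : ∀ m, 6 * m ≤ 5 * psum K m + 5 := by
  have key : ∀ q, ∀ r, r < 3 → 6 * (3 * q + r) ≤ 5 * psum K (3 * q + r) + 5 := by
    intro q
    induction q with
    | zero =>
      intro r hr
      have p0 : psum K 0 = 0 := by simp [psum]
      have p1 : psum K 1 = psum K 0 + K 0 := psum_succ K 0
      have p2 : psum K 2 = psum K 1 + K 1 := psum_succ K 1
      have h0 := hK.2.1
      have h1 := hK.1 1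
      interval_cases r <;> simp only [Nat.mul_zero, Nat.zero_add] <;> omega
    | succ q ih =>
      intro r hr
      have h := ih r hr
      have hts := three_sum K hK (3 * q + r)
      have hp := psum_three K (3 * q + r)
      have e : 3 * (q + 1) + r = 3 * q + r + 3 := by ring
      rw [e]
      omega
  intro m
  have : m = 3 * (m / 3) + m % 3 := (Nat.div_add_mod m 3).symm
  rw [this]
  exact key (m / 3) (m % 3) (Nat.mod_lt m (by omega))

/-- For a (1-indexed) position `n ≥ 1` of the classical
Kolakoski sequence, if `m ≥ 1` is the index of the run containing position `n`,
i.e. `K₁ + ⋯ + K_{m-1} < n ≤ K₁ + ⋯ + K_m`, then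
`(5/9)·n ≤ m ≤ (5/6)·n + 1`. -/
theorem kolakoski_run_index_bounds (K : ℕ → ℕ) (hK : IsKolakoski K)
    (n m : ℕ) (hn : 1 ≤ n) (hm : 1 ≤ m)
    (h₁ : psum K (m - 1) < n) (h₂ : n ≤ psum K m) :
    5 * n ≤ 9 * m ∧ 6 * m ≤ 5 * n + 6 := by
  have hA := lemA K hK m
  have hB := lemB K hK (m - 1)
  omega
end
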